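/- For a contraction T : W → V between real inner product spaces (‖Tw‖ ≤ ‖w‖ for all w), the Gram determinant is non-increasing: for any vectors v₁, …, v_k ∈ W, det(⟨T v_i, T v_j⟩)_{i,j} ≤ det(⟨v_i, v_j⟩)_{i,j}. -/

import Mathlib

open scoped RealInnerProductSpace

open Matrix MatrixOrder in
/-- Monotonicity of determinants with respect to the Loewner order on real
positive semidefinite matrices. -/
lemma det_le_det_of_posSemidef {n : Type*} [Fintype n] [DecidableEq n]
    {A B : Matrix n n ℝ} (hA : A.PosSemidef) (hBA : (B - A).PosSemidef) :
    A.det ≤ B.det := by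
  have hB : B.PosSemidef := by simpa using hA.add hBA
  by_cases hd : B.det = 0
  · -- then `A` is singular too
    obtain ⟨x, hx0, hx⟩ := (Matrix.exists_mulVec_eq_zero_iff).2 hd
    have hBx : star x ⬝ᵥ B *ᵥ x = 0 := by rw [hx, dotProduct_zero]
    have hsub := hBA.dotProduct_mulVec_nonneg x
    rw [sub_mulVec, dotProduct_sub, hBx, zero_sub, neg_nonneg] at hsub
    have hAx : star x ⬝ᵥ A *ᵥ x = 0 := le_antisymm hsub (hA.dotProduct_mulVec_nonneg x)
    have : A.det = 0 := by
      rw [← Matrix.exists_mulVec_eq_zero_iff]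
      exact ⟨x, hx0, (hA.dotProduct_mulVec_zero_iff x).1 hAx⟩
    rw [this, hd]
  · -- `B` is invertible; conjugate by the inverse of its square root
    set C := CFC.sqrt B with hCdef
    have hCps : C.PosSemidef := (CFC.sqrt_nonneg B).posSemidef
    have hCherm : C.IsHermitian := hCps.isHermitian
    have hCC : C * C = B := CFC.sqrt_mul_sqrt_self B hB.nonneg
    have hdetC : C.det * C.det = B.det := by rw [← det_mul, hCC]
    have hCdet : IsUnit C.det := by
      refine isUnit_iff_ne_zero.2 fun h => hd ?_
      rw [← hdetC, h, mul_zero]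
    have hCinv : C⁻¹ᴴ = C⁻¹ := by
      rw [conjTranspose_nonsing_inv, hCherm.eq]
    have hCinvC : C⁻¹ * C = 1 := nonsing_inv_mul C hCdet
    have hCCinv : C * C⁻¹ = 1 := mul_nonsing_inv C hCdet
    set M := C⁻¹ * A * C⁻¹ with hMdef
    have hM : M.PosSemidef := by
      have := hA.conjTranspose_mul_mul_same C⁻¹
      rwa [hCinv] at this
    have h1M : (1 - M).PosSemidef := by
      have := hBA.conjTranspose_mul_mul_same C⁻¹
      rw [hCinv] at this
      have key : C⁻¹ * (B - A) * C⁻¹ = 1 - M := by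
        rw [Matrix.mul_sub, Matrix.sub_mul, hMdef, ← hCC]
        congr 1
        rw [← Matrix.mul_assoc, hCinvC, Matrix.one_mul, hCCinv]
      rwa [key] at this
    -- eigenvalues of `M` lie in `[0, 1]`, hence `det M ≤ 1`
    have hdetM : M.det ≤ 1 := by
      rw [hM.isHermitian.det_eq_prod_eigenvalues]
      refine Finset.prod_le_one (fun i _ => hM.eigenvalues_nonneg i) (fun i _ => ?_)
      set w : n → ℝ := ⇑(hM.isHermitian.eigenvectorBasis i) with hw
      have hmv : M *ᵥ w = hM.isHermitian.eigenvalues i • w :=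
        hM.isHermitian.mulVec_eigenvectorBasis i
      have hnorm : w ⬝ᵥ w = 1 := by
        have h1 : ‖hM.isHermitian.eigenvectorBasis i‖ = 1 :=
          hM.isHermitian.eigenvectorBasis.orthonormal.1 i
        have h2 : (⟪hM.isHermitian.eigenvectorBasis i,
            hM.isHermitian.eigenvectorBasis i⟫ : ℝ) = 1 := by
          rw [real_inner_self_eq_norm_sq, h1]; norm_num
        rw [← h2]
        rw [PiLp.inner_apply]; simp [hw, dotProduct, RCLike.inner_apply, mul_comm, sq]
      have := h1M.dotProduct_mulVec_nonneg w
      rw [sub_mulVec, dotProduct_sub, one_mulVec, hmv, dotProduct_smul, smul_eq_mul,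
        star_trivial, hnorm, mul_one, sub_nonneg] at this
      exact this
    have hdetBpos : (0:ℝ) < B.det := lt_of_le_of_ne (hdetC ▸ mul_self_nonneg C.det)
      (Ne.symm hd)
    have hAeq : A.det = B.det * M.det := by
      have : C * M * C = A := by
        rw [hMdef, Matrix.mul_assoc, Matrix.mul_assoc, hCinvC, Matrix.mul_one,
          ← Matrix.mul_assoc, hCCinv, Matrix.one_mul]
      rw [← this, det_mul, det_mul, mul_comm C.det M.det, mul_assoc, ← hdetC]
      ring
    calc A.det = B.det * M.det := hAeq
      _ ≤ B.det * 1 := by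
          exact mul_le_mul_of_nonneg_left hdetM hdetBpos.le
      _ = B.det := mul_one _

open Matrix in
/-- The quadratic form of a Gram matrix. -/
lemma gram_dotProduct {V : Type*} [NormedAddCommGroup V] [InnerProductSpace ℝ V]
    {k : ℕ} (w : Fin k → V) (x : Fin k → ℝ) :
    x ⬝ᵥ (Matrix.of fun i j => (⟪w i, w j⟫ : ℝ)) *ᵥ x
      = ⟪∑ i, x i • w i, ∑ j, x j • w j⟫ := by
  rw [sum_inner]
  simp only [dotProduct, mulVec, dotProduct, Matrix.of_apply, inner_sum,
    real_inner_smul_left, real_inner_smul_right, Finset.mul_sum]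
  exact Finset.sum_congr rfl fun i _ => Finset.sum_congr rfl fun j _ => by ring

open Matrix in
lemma gram_posSemidef {V : Type*} [NormedAddCommGroup V] [InnerProductSpace ℝ V]
    {k : ℕ} (w : Fin k → V) :
    (Matrix.of fun i j => (⟪w i, w j⟫ : ℝ)).PosSemidef := by
  apply Matrix.PosSemidef.of_dotProduct_mulVec_nonneg
  · ext i j
    simp [Matrix.conjTranspose_apply, real_inner_comm]
  · intro x
    rw [star_trivial, gram_dotProduct]
    exact real_inner_self_nonneg

/-- For a linear contraction `T : W → V` between real inner product spaces,
the Gram determinant is non-increasing: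
`det (⟨T v_i, T v_j⟩) ≤ det (⟨v_i, v_j⟩)` for any `v₁, …, v_k ∈ W`. -/
theorem gram_det_contraction
    {V W : Type*} [NormedAddCommGroup V] [InnerProductSpace ℝ V]
    [NormedAddCommGroup W] [InnerProductSpace ℝ W]
    (T : W →ₗ[ℝ] V) (hT : ∀ w : W, ‖T w‖ ≤ ‖w‖)
    {k : ℕ} (v : Fin k → W) :
    Matrix.det (Matrix.of fun i j => ⟪T (v i), T (v j)⟫) ≤
      Matrix.det (Matrix.of fun i j => ⟪v i, v j⟫) := by
  set A : Matrix (Fin k) (Fin k) ℝ := Matrix.of fun i j => ⟪T (v i), T (v j)⟫ with hAdef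
  set B : Matrix (Fin k) (Fin k) ℝ := Matrix.of fun i j => ⟪v i, v j⟫ with hBdef
  have hA : A.PosSemidef := gram_posSemidef (fun i => T (v i))
  have hB : B.PosSemidef := gram_posSemidef v
  refine det_le_det_of_posSemidef hA ?_
  apply Matrix.PosSemidef.of_dotProduct_mulVec_nonneg
  · exact (hB.isHermitian).sub (hA.isHermitian)
  · intro x
    rw [star_trivial, Matrix.sub_mulVec, dotProduct_sub, hAdef, hBdef,
      gram_dotProduct, gram_dotProduct, sub_nonneg]
    have hTs : (∑ i, x i • T (v i)) = T (∑ i, x i • v i) := by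
      rw [map_sum]; simp [map_smul]
    rw [hTs, real_inner_self_eq_norm_sq, real_inner_self_eq_norm_sq]
    have := hT (∑ i, x i • v i)
    exact pow_le_pow_left₀ (norm_nonneg _) this 2
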